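/- arXiv:1511.07621 — 2 statements merged into one kernel-verified Lean document; each statement's English description precedes it below -/
import Mathlib

section
/- Let r ≥ 2, let ρ_1, …, ρ_r be distinct real numbers, c a real number, and let F : Fin r → Fin r → Fin r → ℝ be symmetric in all three indices with F i j k = 0 whenever two of the eigenvalue indices coincide. If for all i ≠ j one has c − ρ_i·ρ_j = Σ_{k ≠ i, k ≠ j} (F i j k)² / ((ρ_i − ρ_k)(ρ_j − ρ_k)), then for each fixed i: Σ_{j ≠ i} (c − ρ_i·ρ_j)/(ρ_i − ρ_j) = 0. -/
/-!
Dividing the relation for `c - ρ i * ρ j` by `ρ i - ρ j` writes each summand as a sum over `k`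
of `F i j k ^ 2 / ((ρ i - ρ k) * (ρ j - ρ k) * (ρ i - ρ j))`. Since `F i j k = F i k j`, this
term is antisymmetric in `(j, k)`, so the resulting double sum vanishes.
-/

open Finset

theorem Finset.sum_sum_eq_zero_of_antisymm {ι M : Type*} [AddCommGroup M] [IsAddTorsionFree M]
    (s : Finset ι) {f : ι → ι → M} (hf : ∀ j k, f j k = -f k j) :
    ∑ j ∈ s, ∑ k ∈ s, f j k = 0 :=
  self_eq_neg.mp <| calc
    ∑ j ∈ s, ∑ k ∈ s, f j k = ∑ j ∈ s, ∑ k ∈ s, f k j := sum_comm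
    _ = ∑ j ∈ s, ∑ k ∈ s, -f j k := sum_congr rfl fun j _ => sum_congr rfl fun k _ => hf k j
    _ = -∑ j ∈ s, ∑ k ∈ s, f j k := by simp only [sum_neg_distrib]

theorem sq_div_sub_mul_sub_mul_sub_antisymm {ι K : Type*} [Field K] (ρ : ι → K)
    {a : ι → ι → K} (ha : ∀ j k, a j k = a k j) (i j k : ι) :
    a j k ^ 2 / ((ρ i - ρ k) * (ρ j - ρ k) * (ρ i - ρ j)) =
      -(a k j ^ 2 / ((ρ i - ρ j) * (ρ k - ρ j) * (ρ i - ρ k))) := by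
  rw [ha k j, ← div_neg]
  congr 1
  ring

theorem stmt_3_general (r : ℕ) (ρ : Fin r → ℝ)
    (c : ℝ) (F : Fin r → Fin r → Fin r → ℝ)
    (hsym2 : ∀ i j k, F i j k = F i k j)
    (heq : ∀ i j, i ≠ j →
      c - ρ i * ρ j =
        ∑ k ∈ Finset.univ.filter (fun k => k ≠ i ∧ k ≠ j),
          (F i j k) ^ 2 / ((ρ i - ρ k) * (ρ j - ρ k))) :
    ∀ i, ∑ j ∈ Finset.univ.filter (fun j => j ≠ i),
      (c - ρ i * ρ j) / (ρ i - ρ j) = 0 := by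
  intro i
  set s := univ.filter (fun j => j ≠ i)
  set G : Fin r → Fin r → ℝ := fun j k =>
    F i j k ^ 2 / ((ρ i - ρ k) * (ρ j - ρ k) * (ρ i - ρ j))
  have hG : ∀ j k, G j k = -G k j := sq_div_sub_mul_sub_mul_sub_antisymm ρ (hsym2 i) i
  calc ∑ j ∈ s, (c - ρ i * ρ j) / (ρ i - ρ j)
      = ∑ j ∈ s, ∑ k ∈ s, G j k := sum_congr rfl fun j hj => by
        have hji : j ≠ i := (mem_filter.mp hj).2
        have hfilter : univ.filter (fun k => k ≠ i ∧ k ≠ j) = s.erase j := by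
          ext k; simp [s, and_comm]
        rw [heq i j hji.symm, sum_div, hfilter, ← sum_erase s (self_eq_neg.mp (hG j j))]
        simp only [G, div_div]
    _ = 0 := sum_sum_eq_zero_of_antisymm s hG

theorem stmt_3 (r : ℕ) (hr : 2 ≤ r) (ρ : Fin r → ℝ) (hρ : Function.Injective ρ)
    (c : ℝ) (F : Fin r → Fin r → Fin r → ℝ)
    (hsym1 : ∀ i j k, F i j k = F j i k)
    (hsym2 : ∀ i j k, F i j k = F i k j)
    (hvan : ∀ i j k, i = j ∨ j = k ∨ i = k → F i j k = 0)
    (heq : ∀ i j, i ≠ j →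
      c - ρ i * ρ j =
        ∑ k ∈ Finset.univ.filter (fun k => k ≠ i ∧ k ≠ j),
          (F i j k) ^ 2 / ((ρ i - ρ k) * (ρ j - ρ k))) :
    ∀ i, ∑ j ∈ Finset.univ.filter (fun j => j ≠ i),
      (c - ρ i * ρ j) / (ρ i - ρ j) = 0 :=
  stmt_3_general r ρ c F hsym2 heq
end

section
/- Let r ≥ 3 and let ρ_1 < ρ_2 < ⋯ < ρ_r be real numbers with ρ_1 < 0, and let c be a real number with c − ρ_m·ρ_{m+1} ≥ 0 for all 1 ≤ m ≤ r−1. Then Σ_{j=2}^{r} (c − ρ_1·ρ_j)/(ρ_1 − ρ_j) < 0. -/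
/-!
Since `ρ₀ < 0`, the products `ρ₀ * ρ j` decrease in `j`, so `ρ₀ * ρ₁ ≤ c` gives `ρ₀ * ρ j ≤ c` for
every `j ≥ 1`, strictly for `j ≥ 2`. Each summand is then a nonnegative numerator over the negative
denominator `ρ₀ - ρ j`, and the one at `j = 2` is strictly negative.
-/

lemma div_sub_nonpos_of_mul_le {a b c : ℝ} (hab : a < b) (h : a * b ≤ c) :
    (c - a * b) / (a - b) ≤ 0 :=
  div_nonpos_of_nonneg_of_nonpos (sub_nonneg.2 h) (sub_nonpos.2 hab.le)

lemma div_sub_neg_of_mul_lt {a b c : ℝ} (hab : a < b) (h : a * b < c) :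
    (c - a * b) / (a - b) < 0 :=
  div_neg_of_pos_of_neg (sub_pos.2 h) (sub_neg.2 hab)

theorem stmt_4 (r : ℕ) (hr : 3 ≤ r) (ρ : Fin r → ℝ) (hmono : StrictMono ρ)
    (hneg : ρ ⟨0, by omega⟩ < 0) (c : ℝ)
    (hc : ∀ m : Fin r, ∀ h : m.val + 1 < r, 0 ≤ c - ρ m * ρ ⟨m.val + 1, h⟩) :
    ∑ j ∈ Finset.univ.filter (fun j => j ≠ (⟨0, by omega⟩ : Fin r)),
      (c - ρ ⟨0, by omega⟩ * ρ j) / (ρ ⟨0, by omega⟩ - ρ j) < 0 := by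
  set i₀ : Fin r := ⟨0, by omega⟩
  set i₁ : Fin r := ⟨1, by omega⟩
  set i₂ : Fin r := ⟨2, by omega⟩
  have hc₁ : ρ i₀ * ρ i₁ ≤ c := sub_nonneg.1 (hc i₀ (by simp only [i₀]; omega))
  have hpos : ∀ j ∈ Finset.univ.filter (· ≠ i₀), i₁ ≤ j := fun j hj => by
    simp only [Finset.mem_filter, Finset.mem_univ, true_and, ne_eq, Fin.ext_iff] at hj
    exact Fin.le_def.2 (Nat.one_le_iff_ne_zero.2 hj)
  refine Finset.sum_neg' (fun j hj => div_sub_nonpos_of_mul_le ?_ ?_) ⟨i₂, ?_, ?_⟩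
  · exact hmono (lt_of_lt_of_le (by simp [i₀, i₁, Fin.lt_def]) (hpos j hj))
  · exact (mul_le_mul_of_nonpos_left (hmono.monotone (hpos j hj)) hneg.le).trans hc₁
  · simp [i₀, i₂, Fin.ext_iff]
  · have h₁₂ : ρ i₁ < ρ i₂ := hmono (by simp [i₁, i₂, Fin.lt_def])
    refine div_sub_neg_of_mul_lt (hmono (by simp [i₀, i₂, Fin.lt_def])) ?_
    exact (mul_lt_mul_of_neg_left h₁₂ hneg).trans_le hc₁
end
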